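/- Assume the fourth-moment asymptotic for ζ: there are κ ∈ (0,1), a real polynomial P of degree 4, and C₀ > 0 such that |(1/T)·∫_0^T |ζ(1/2+iu)|⁴ du − P(log T)| ≤ C₀·T^{−κ} for all T ≥ 2. Then there is a constant C > 0 (depending only on κ, P, C₀) such that for all t ≥ 10: ∫_0^1 |ζ(1/2+ir)|²·|ζ(1/2+i(2t−r))|² dr ≤ C·t^{1/2}·(log t)². -/

import Mathlib

open MeasureTheory intervalIntegral

/-! Weighted AM–GM, `a b ≤ (ℓ / 2) a² + b² / (2 ℓ)` with `ℓ = √t (log t)²`, bounds the integral by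
`(ℓ / 2) ∫₀¹ |ζ|⁴ + (1 / (2 ℓ)) ∫_{2t-1}^{2t} |ζ|⁴`. The fourth-moment asymptotic bounds the first
integral by a constant and the second, through `∫₀^{2t} |ζ|⁴ ≪ t (log t)⁴`, by `t (log t)⁴`; this
choice of `ℓ` balances the two terms. -/

theorem Polynomial.abs_eval_le_sum_abs_coeff_mul_pow {P : Polynomial ℝ} {n : ℕ}
    (hP : P.natDegree ≤ n) {x : ℝ} (hx : 1 ≤ x) :
    |P.eval x| ≤ (∑ i ∈ Finset.range (n + 1), |P.coeff i|) * x ^ n := by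
  rw [eval_eq_sum_range' (Nat.lt_succ_of_le hP), Finset.sum_mul]
  refine (Finset.abs_sum_le_sum_abs _ _).trans (Finset.sum_le_sum fun i hi => ?_)
  rw [abs_mul, abs_pow, abs_of_nonneg (zero_le_one.trans hx)]
  exact mul_le_mul_of_nonneg_left
    (pow_le_pow_right₀ hx (Nat.lt_succ_iff.mp (Finset.mem_range.mp hi))) (abs_nonneg _)

theorem le_mul_abs_add_of_abs_div_sub_le {I p T C κ : ℝ} (hT : 1 ≤ T) (hκ : 0 ≤ κ) (hC : 0 ≤ C)
    (h : |1 / T * I - p| ≤ C * T ^ (-κ)) : I ≤ T * (|p| + C) := by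
  have hdecay : C * T ^ (-κ) ≤ C :=
    mul_le_of_le_one_right hC (Real.rpow_le_one_of_one_le_of_nonpos hT (neg_nonpos.mpr hκ))
  have haverage : 1 / T * I ≤ |p| + C := by
    linarith [le_abs_self p, (abs_sub_le_iff.mp h).1]
  calc I = T * (1 / T * I) := by field_simp
    _ ≤ T * (|p| + C) := mul_le_mul_of_nonneg_left haverage (by linarith)

theorem Real.log_two_mul_le {t : ℝ} (ht : 2 ≤ t) : Real.log (2 * t) ≤ 2 * Real.log t := by
  rw [Real.log_mul two_ne_zero (by linarith), two_mul]
  gcongr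

def HasPolyLogMean (g : ℝ → ℝ) (P : Polynomial ℝ) (C κ : ℝ) : Prop :=
  ∀ T : ℝ, 2 ≤ T → |1 / T * (∫ u in (0:ℝ)..T, g u) - P.eval (Real.log T)| ≤ C * T ^ (-κ)

namespace HasPolyLogMean

variable {g : ℝ → ℝ} {P : Polynomial ℝ} {C κ : ℝ}

theorem integral_le (h : HasPolyLogMean g P C κ) (hκ : 0 ≤ κ) (hC : 0 ≤ C) {T : ℝ}
    (hT : 2 ≤ T) : ∫ u in (0:ℝ)..T, g u ≤ T * (|P.eval (Real.log T)| + C) :=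
  le_mul_abs_add_of_abs_div_sub_le (by linarith) hκ hC (h T hT)

theorem integral_two_mul_le (h : HasPolyLogMean g P C κ) {n : ℕ} (hP : P.natDegree ≤ n)
    (hκ : 0 ≤ κ) (hC : 0 ≤ C) {t : ℝ} (ht : Real.exp 1 ≤ t) :
    ∫ u in (0:ℝ)..(2 * t), g u ≤
      2 ^ (n + 1) * (∑ i ∈ Finset.range (n + 1), |P.coeff i| + C) * t * Real.log t ^ n := by
  have ht₂ : 2 ≤ t := by linarith [Real.add_one_le_exp 1]
  have hlog : 1 ≤ Real.log (2 * t) :=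
    (Real.le_log_iff_exp_le (by linarith)).mpr (by linarith)
  have hC_le : C ≤ C * Real.log (2 * t) ^ n := le_mul_of_one_le_right hC (one_le_pow₀ hlog)
  calc ∫ u in (0:ℝ)..(2 * t), g u ≤ 2 * t * (|P.eval (Real.log (2 * t))| + C) :=
        h.integral_le hκ hC (by linarith)
    _ ≤ 2 * t * ((∑ i ∈ Finset.range (n + 1), |P.coeff i|) * Real.log (2 * t) ^ n +
          C * Real.log (2 * t) ^ n) := by
        gcongr
        exact P.abs_eval_le_sum_abs_coeff_mul_pow hP hlog
    _ ≤ 2 * t * ((∑ i ∈ Finset.range (n + 1), |P.coeff i| + C) * (2 * Real.log t) ^ n) := by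
        rw [← add_mul]
        gcongr
        exact Real.log_two_mul_le ht₂
    _ = _ := by ring

end HasPolyLogMean

theorem mul_le_half_mul_sq_add {a b l : ℝ} (hl : 0 < l) :
    a * b ≤ l / 2 * a ^ 2 + 1 / (2 * l) * b ^ 2 := by
  have hsq : 0 ≤ (l * a - b) ^ 2 / (2 * l) := by positivity
  have hexpand : (l * a - b) ^ 2 / (2 * l) = l / 2 * a ^ 2 + 1 / (2 * l) * b ^ 2 - a * b := by
    field_simp
    ring
  linarith

theorem intervalIntegral.integral_mul_le_half_mul_integral_sq_add {u v : ℝ → ℝ} {a b l : ℝ}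
    (hab : a ≤ b) (hl : 0 < l) (huv : IntervalIntegrable (fun x => u x * v x) volume a b)
    (hu : IntervalIntegrable (fun x => u x ^ 2) volume a b)
    (hv : IntervalIntegrable (fun x => v x ^ 2) volume a b) :
    ∫ x in a..b, u x * v x ≤
      l / 2 * (∫ x in a..b, u x ^ 2) + 1 / (2 * l) * ∫ x in a..b, v x ^ 2 := by
  rw [← integral_const_mul, ← integral_const_mul,
    ← integral_add (hu.const_mul _) (hv.const_mul _)]
  exact integral_mono_on hab huv ((hu.const_mul _).add (hv.const_mul _))
    fun x _ => mul_le_half_mul_sq_add hl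

theorem integral_mul_comp_sub_le {f : ℝ → ℝ} (hf : Continuous f) {c l M N : ℝ} (hl : 0 < l)
    (h₀ : ∫ x in (0:ℝ)..1, f x ^ 2 ≤ M) (h₁ : ∫ x in (c - 1)..c, f x ^ 2 ≤ N) :
    ∫ r in (0:ℝ)..1, f r * f (c - r) ≤ l / 2 * M + N / (2 * l) := by
  have hreflect : Continuous fun r => f (c - r) := hf.comp (continuous_sub_left c)
  have hflip : ∫ r in (0:ℝ)..1, f (c - r) ^ 2 = ∫ x in (c - 1)..c, f x ^ 2 := by
    simpa using integral_comp_sub_left (fun x => f x ^ 2) c (a := 0) (b := 1)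
  calc ∫ r in (0:ℝ)..1, f r * f (c - r)
      ≤ l / 2 * (∫ r in (0:ℝ)..1, f r ^ 2) + 1 / (2 * l) * ∫ r in (0:ℝ)..1, f (c - r) ^ 2 :=
        integral_mul_le_half_mul_integral_sq_add zero_le_one hl
          ((hf.mul hreflect).intervalIntegrable _ _) ((hf.pow 2).intervalIntegrable _ _)
          ((hreflect.pow 2).intervalIntegrable _ _)
    _ ≤ l / 2 * M + 1 / (2 * l) * N := by
        rw [hflip]
        gcongr
    _ = l / 2 * M + N / (2 * l) := by ring

theorem continuous_norm_riemannZeta_one_half_add_I_mul :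
    Continuous fun u : ℝ => ‖riemannZeta (1 / 2 + Complex.I * u)‖ := by
  refine continuous_norm.comp (continuous_iff_continuousAt.mpr fun u => ?_)
  have hne : (1 / 2 + Complex.I * u : ℂ) ≠ 1 := fun h => by
    simpa using congrArg Complex.re h
  exact (differentiableAt_riemannZeta hne).continuousAt.comp
    (f := fun u : ℝ => (1 / 2 + Complex.I * u : ℂ)) (by fun_prop)

theorem stmt8 (κ : ℝ) (hκ : κ ∈ Set.Ioo (0:ℝ) 1) (P : Polynomial ℝ) (hP : P.degree = 4)
    (C₀ : ℝ) (hC₀ : 0 < C₀)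
    (hmom : ∀ T : ℝ, 2 ≤ T →
      |(1 / T) * (∫ u in (0:ℝ)..T, ‖riemannZeta (1/2 + Complex.I * u)‖ ^ 4) -
          P.eval (Real.log T)| ≤ C₀ * T ^ (-κ)) :
    ∃ C > (0:ℝ), ∀ t : ℝ, 10 ≤ t →
      (∫ r in (0:ℝ)..1,
          ‖riemannZeta (1/2 + Complex.I * r)‖ ^ 2 *
            ‖riemannZeta (1/2 + Complex.I * (2 * t - r))‖ ^ 2) ≤
        C * Real.sqrt t * (Real.log t) ^ 2 := by
  set Z : ℝ → ℝ := fun u => ‖riemannZeta (1 / 2 + Complex.I * u)‖ ^ 2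
  have hZ : Continuous Z := continuous_norm_riemannZeta_one_half_add_I_mul.pow 2
  have hmean : HasPolyLogMean (fun u => Z u ^ 2) P C₀ κ := by
    simpa only [HasPolyLogMean, Z, ← pow_mul] using hmom
  have hZ_nonneg (T : ℝ) : 0 ≤ᵐ[volume.restrict (Set.Ioc 0 T)] fun u => Z u ^ 2 :=
    Filter.Eventually.of_forall fun u => sq_nonneg _
  set M := 2 * (|P.eval (Real.log 2)| + C₀)
  set K := 2 ^ (4 + 1) * (∑ i ∈ Finset.range (4 + 1), |P.coeff i| + C₀)
  refine ⟨M / 2 + K / 2, by positivity, fun t ht => ?_⟩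
  have hexp : Real.exp 1 ≤ t := by linarith [Real.exp_one_lt_d9]
  have hhead : ∫ u in (0:ℝ)..1, Z u ^ 2 ≤ M :=
    (integral_mono_interval le_rfl zero_le_one one_le_two (hZ_nonneg 2)
      ((hZ.pow 2).intervalIntegrable _ _)).trans (hmean.integral_le hκ.1.le hC₀.le le_rfl)
  have htail : ∫ u in (2 * t - 1)..(2 * t), Z u ^ 2 ≤ K * t * Real.log t ^ 4 :=
    (integral_mono_interval (by linarith) (by linarith) le_rfl (hZ_nonneg _)
      ((hZ.pow 2).intervalIntegrable _ _)).trans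
      (hmean.integral_two_mul_le (Polynomial.natDegree_le_of_degree_le hP.le) hκ.1.le hC₀.le hexp)
  have hlog : 0 < Real.log t := Real.log_pos (by linarith)
  calc _ = ∫ r in (0:ℝ)..1, Z r * Z (2 * t - r) := by push_cast [Z]; rfl
    _ ≤ √t * Real.log t ^ 2 / 2 * M + K * t * Real.log t ^ 4 / (2 * (√t * Real.log t ^ 2)) :=
        integral_mul_comp_sub_le hZ (by positivity) hhead htail
    _ = (M / 2 + K / 2) * √t * Real.log t ^ 2 := by
        have hsqrt : √t ^ 2 = t := Real.sq_sqrt (by linarith)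
        field_simp
        rw [hsqrt]
        ring
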